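/- Let X be a compactum and R ⊆ X a nonempty closed subset. Then the set A = {μ ∈ M_∪X : μ(X ∖ R) = 0} of possibility capacities supported in R equals [μ₀X, ν_R] ∩ M_∪X, where μ₀X is the least capacity (μ₀X(A)=0 for A ≠ X, μ₀X(X)=1) and ν_R is the possibility capacity with ν_R(A) = 1 if A ∩ R ≠ ∅ and ν_R(A) = 0 otherwise; in particular A is a closed subset of M_∪X and an element of the convexity C_{∪X}. -/

import Mathlib

open Set TopologicalSpace

universe u v

/-- A (upper-semicontinuous) capacity on a topological space `X`:
a normalized monotone set function on the closed subsets, upper semicontinuous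
in the sense of Zarichnyi–Nykyforchyn. -/
structure Capacity (X : Type u) [TopologicalSpace X] : Type u where
  toFun : Closeds X → ℝ
  empty' : toFun ⊥ = 0
  univ' : toFun ⊤ = 1
  mono' : ∀ F G : Closeds X, F ≤ G → toFun F ≤ toFun G
  usc' : ∀ (F : Closeds X) (a : ℝ), toFun F < a →
    ∃ O : Set X, IsOpen O ∧ (F : Set X) ⊆ O ∧ ∀ B : Closeds X, (B : Set X) ⊆ O → toFun B < a

namespace Capacity

variable {X : Type u} [TopologicalSpace X]

/-- Value of a capacity on (the closure of) an arbitrary set; on closed sets this is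
the value of the capacity. -/
def cval (ν : Capacity X) (A : Set X) : ℝ := ν.toFun ⟨closure A, isClosed_closure⟩

/-- The sup-extension of a capacity to open sets:
`ν(U) = sup {ν K : K closed, K ⊆ U}`. -/
noncomputable def oval (ν : Capacity X) (U : Set X) : ℝ :=
  sSup {r : ℝ | ∃ K : Closeds X, (K : Set X) ⊆ U ∧ ν.toFun K = r}

end Capacity

/-- The topology on the space `MX` of capacities, generated by the subbase
`O₋(F,a) = {c : c(F) < a}` (`F` closed) and `O₊(U,a) = {c : c(U) > a}` (`U` open). -/
instance capacityTopology (X : Type u) [TopologicalSpace X] : TopologicalSpace (Capacity X) :=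
  TopologicalSpace.generateFrom
    ({S | ∃ (F : Closeds X) (a : ℝ), a ∈ Icc (0:ℝ) 1 ∧
        S = {c : Capacity X | c.toFun F < a}} ∪
     {S | ∃ U : Set X, IsOpen U ∧ ∃ a ∈ Icc (0:ℝ) 1,
        S = {c : Capacity X | a < c.oval U}})

/-- A possibility capacity: `ν(A ∪ B) = max (ν A) (ν B)` on closed sets. -/
def IsPossibility {X : Type u} [TopologicalSpace X] (ν : Capacity X) : Prop :=
  ∀ A B : Closeds X, ν.toFun (A ⊔ B) = max (ν.toFun A) (ν.toFun B)

/-- A necessity capacity: `ν(A ∩ B) = min (ν A) (ν B)` on closed sets. -/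
def IsNecessity {X : Type u} [TopologicalSpace X] (ν : Capacity X) : Prop :=
  ∀ A B : Closeds X, ν.toFun (A ⊓ B) = min (ν.toFun A) (ν.toFun B)

/-- A triangular norm on `[0,1]`. -/
structure Tnorm : Type where
  toFun : ℝ → ℝ → ℝ
  mem' : ∀ s ∈ Icc (0:ℝ) 1, ∀ t ∈ Icc (0:ℝ) 1, toFun s t ∈ Icc (0:ℝ) 1
  comm' : ∀ s ∈ Icc (0:ℝ) 1, ∀ t ∈ Icc (0:ℝ) 1, toFun s t = toFun t s
  assoc' : ∀ s ∈ Icc (0:ℝ) 1, ∀ t ∈ Icc (0:ℝ) 1, ∀ r ∈ Icc (0:ℝ) 1,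
    toFun (toFun s t) r = toFun s (toFun t r)
  mono' : ∀ s₁ ∈ Icc (0:ℝ) 1, ∀ s₂ ∈ Icc (0:ℝ) 1, ∀ t₁ ∈ Icc (0:ℝ) 1, ∀ t₂ ∈ Icc (0:ℝ) 1,
    s₁ ≤ s₂ → t₁ ≤ t₂ → toFun s₁ t₁ ≤ toFun s₂ t₂
  one' : ∀ s ∈ Icc (0:ℝ) 1, toFun s 1 = s

/-- Continuity of a t-norm (on the unit square). -/
def Tnorm.Cont (star : Tnorm) : Prop :=
  ContinuousOn (fun q : ℝ × ℝ => star.toFun q.1 q.2) (Icc 0 1 ×ˢ Icc 0 1)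

/-- The t-normed (fuzzy) integral `∫^{∨∗} f dν = sup { ν(f⁻¹[t,1]) ∗ t : t ∈ [0,1] }`. -/
noncomputable def tInt {X : Type u} [TopologicalSpace X] (star : Tnorm) (ν : Capacity X) (f : X → ℝ) : ℝ :=
  sSup {r : ℝ | ∃ t ∈ Icc (0:ℝ) 1, r = star.toFun (ν.cval (f ⁻¹' Icc t 1)) t}
/-- The convexity `C_{∪X}` on the space `M_∪X` of possibility capacities: a set `A` of
possibility capacities belongs to it iff it is empty, or it is nonempty, closed and
equals `[⋀A, ⋁A] ∩ M_∪X` (pointwise order interval between the pointwise infimum and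
supremum of `A`). -/
def InConvexU {X : Type u} [TopologicalSpace X] (A : Set (Capacity X)) : Prop :=
  A = ∅ ∨ (A.Nonempty ∧ IsClosed A ∧ (∀ ν ∈ A, IsPossibility ν) ∧
    A = {α : Capacity X | IsPossibility α ∧ ∀ F : Closeds X,
      sInf ((fun ν : Capacity X => ν.toFun F) '' A) ≤ α.toFun F ∧
      α.toFun F ≤ sSup ((fun ν : Capacity X => ν.toFun F) '' A)})

/-!
Since `μ₀` vanishes on every proper closed set and `ν_R` is the indicator of meeting `R`, the
bounds `μ₀ ∧ ν_R ≤ α ≤ μ₀ ∨ ν_R` say exactly that `α` vanishes on the closed sets missing `R`,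
i.e. `α(X ∖ R) = 0`. Vanishing on the open set `X ∖ R` is the complement of a subbasic open
condition, and failing to be a possibility capacity is an open condition by upper
semicontinuity and normality of `X`; so `A` is closed. Finally, any order interval `A` (cut
down by a side condition) containing some element is also the order interval between its own
pointwise infimum and supremum, and `ν_R ∈ A`.
-/

namespace Capacity

variable {X : Type u} [TopologicalSpace X]

lemma toFun_nonneg (ν : Capacity X) (F : Closeds X) : 0 ≤ ν.toFun F :=
  ν.empty' ▸ ν.mono' ⊥ F bot_le

lemma toFun_le_one (ν : Capacity X) (F : Closeds X) : ν.toFun F ≤ 1 :=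
  ν.univ' ▸ ν.mono' F ⊤ le_top

lemma cval_coe (ν : Capacity X) (F : Closeds X) : ν.cval F = ν.toFun F :=
  congrArg ν.toFun (Closeds.ext F.isClosed.closure_eq)

lemma bddAbove_oval_set (ν : Capacity X) (U : Set X) :
    BddAbove {r : ℝ | ∃ K : Closeds X, (K : Set X) ⊆ U ∧ ν.toFun K = r} :=
  ⟨1, by rintro r ⟨K, -, rfl⟩; exact ν.toFun_le_one K⟩

lemma toFun_le_oval (ν : Capacity X) {U : Set X} {K : Closeds X} (h : (K : Set X) ⊆ U) :
    ν.toFun K ≤ ν.oval U :=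
  le_csSup (ν.bddAbove_oval_set U) ⟨K, h, rfl⟩

lemma oval_nonneg (ν : Capacity X) (U : Set X) : 0 ≤ ν.oval U :=
  ν.empty' ▸ ν.toFun_le_oval (empty_subset U)

lemma oval_le_of_forall_toFun_le (ν : Capacity X) {U : Set X} {a : ℝ}
    (h : ∀ K : Closeds X, (K : Set X) ⊆ U → ν.toFun K ≤ a) : ν.oval U ≤ a :=
  csSup_le ⟨0, ⊥, empty_subset U, ν.empty'⟩ (by rintro r ⟨K, hK, rfl⟩; exact h K hK)

lemma oval_eq_zero_iff (ν : Capacity X) (U : Set X) :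
    ν.oval U = 0 ↔ ∀ K : Closeds X, (K : Set X) ⊆ U → ν.toFun K = 0 := by
  refine ⟨fun h K hK => le_antisymm (h ▸ ν.toFun_le_oval hK) (ν.toFun_nonneg K), fun h => ?_⟩
  exact le_antisymm (ν.oval_le_of_forall_toFun_le fun K hK => (h K hK).le) (ν.oval_nonneg U)

lemma oval_compl_eq_zero_iff (ν : Capacity X) (R : Set X) :
    ν.oval Rᶜ = 0 ↔ ∀ K : Closeds X, Disjoint (K : Set X) R → ν.toFun K = 0 := by
  simp only [oval_eq_zero_iff, subset_compl_iff_disjoint_right]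

lemma oval_le_max_of_subset_union {ν : Capacity X} (hν : IsPossibility ν) {U : Set X}
    {F G : Closeds X} (hU : U ⊆ F ∪ G) : ν.oval U ≤ max (ν.toFun F) (ν.toFun G) :=
  ν.oval_le_of_forall_toFun_le fun K hK =>
    hν F G ▸ ν.mono' K (F ⊔ G) (show (K : Set X) ⊆ F ∪ G from hK.trans hU)

lemma exists_isOpen_toFun_closure_lt [NormalSpace X] (ν : Capacity X) {F : Closeds X} {a : ℝ}
    (h : ν.toFun F < a) :
    ∃ V : Set X, IsOpen V ∧ (F : Set X) ⊆ V ∧ ν.toFun (Closeds.closure V) < a := by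
  obtain ⟨O, hO, hFO, hlt⟩ := ν.usc' F a h
  obtain ⟨V, hV, hFV, hVO⟩ := normal_exists_closure_subset F.isClosed hO hFO
  exact ⟨V, hV, hFV, hlt _ hVO⟩

lemma isOpen_setOf_toFun_lt (F : Closeds X) {a : ℝ} (ha : a ∈ Icc (0 : ℝ) 1) :
    IsOpen {ν : Capacity X | ν.toFun F < a} :=
  isOpen_generateFrom_of_mem (Or.inl ⟨F, a, ha, rfl⟩)

lemma isOpen_setOf_lt_oval {U : Set X} (hU : IsOpen U) {a : ℝ} (ha : a ∈ Icc (0 : ℝ) 1) :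
    IsOpen {ν : Capacity X | a < ν.oval U} :=
  isOpen_generateFrom_of_mem (Or.inr ⟨U, hU, a, ha, rfl⟩)

lemma isClosed_setOf_oval_eq_zero {U : Set X} (hU : IsOpen U) :
    IsClosed {ν : Capacity X | ν.oval U = 0} := by
  rw [← isOpen_compl_iff]
  convert isOpen_setOf_lt_oval hU ⟨le_rfl, zero_le_one⟩ using 1
  ext ν
  exact (ν.oval_nonneg U).lt_iff_ne'.symm

/-- If `ν (A ⊔ B) > a > max (ν A) (ν B)`, the conditions `ν' (closure V_A) < a`,
`ν' (closure V_B) < a` and `ν' (V_A ∪ V_B) > a` cut out a neighbourhood of `ν` that contains no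
possibility capacity. -/
lemma isOpen_setOf_not_isPossibility [NormalSpace X] :
    IsOpen {ν : Capacity X | ¬IsPossibility ν} := by
  refine isOpen_iff_forall_mem_open.mpr fun ν hν => ?_
  obtain ⟨A, B, hAB⟩ : ∃ A B : Closeds X, ν.toFun (A ⊔ B) ≠ max (ν.toFun A) (ν.toFun B) := by
    simpa [IsPossibility] using hν
  have hmax : max (ν.toFun A) (ν.toFun B) < ν.toFun (A ⊔ B) :=
    (max_le (ν.mono' A _ le_sup_left) (ν.mono' B _ le_sup_right)).lt_of_ne' hAB
  obtain ⟨a, hmax_lt, ha_lt⟩ := exists_between hmax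
  have ha : a ∈ Icc (0 : ℝ) 1 :=
    ⟨(ν.toFun_nonneg A).trans ((le_max_left _ _).trans hmax_lt.le),
      ha_lt.le.trans (ν.toFun_le_one _)⟩
  obtain ⟨VA, hVA, hAV, hνA⟩ :=
    ν.exists_isOpen_toFun_closure_lt ((le_max_left _ _).trans_lt hmax_lt)
  obtain ⟨VB, hVB, hBV, hνB⟩ :=
    ν.exists_isOpen_toFun_closure_lt ((le_max_right _ _).trans_lt hmax_lt)
  refine ⟨{ν' | ν'.toFun (Closeds.closure VA) < a} ∩ {ν' | ν'.toFun (Closeds.closure VB) < a} ∩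
      {ν' | a < ν'.oval (VA ∪ VB)}, ?_, ?_, ⟨hνA, hνB⟩, ?_⟩
  · rintro ν' ⟨⟨hA', hB'⟩, hV'⟩ hν'
    have := oval_le_max_of_subset_union (F := .closure VA) (G := .closure VB) hν'
      (union_subset_union subset_closure subset_closure)
    exact (hV'.trans_le this).not_ge (max_le hA'.le hB'.le)
  · exact ((isOpen_setOf_toFun_lt _ ha).inter (isOpen_setOf_toFun_lt _ ha)).inter
      (isOpen_setOf_lt_oval (hVA.union hVB) ha)
  · exact ha_lt.trans_le (ν.toFun_le_oval (union_subset_union hAV hBV))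

lemma isClosed_setOf_isPossibility [NormalSpace X] :
    IsClosed {ν : Capacity X | IsPossibility ν} :=
  isOpen_compl_iff.mp isOpen_setOf_not_isPossibility

section MeetsIndicator

variable {R : Set X} {ν : Capacity X}
  (hν₀ : ∀ F : Closeds X, Disjoint (F : Set X) R → ν.toFun F = 0)
  (hν₁ : ∀ F : Closeds X, ¬Disjoint (F : Set X) R → ν.toFun F = 1)
include hν₀ hν₁

lemma isPossibility_of_meets_indicator : IsPossibility ν := by
  intro A B
  by_cases hA : Disjoint (A : Set X) R <;> by_cases hB : Disjoint (B : Set X) R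
  · rw [hν₀ A hA, hν₀ B hB, hν₀ _ (by simpa using ⟨hA, hB⟩), max_self]
  · rw [hν₀ A hA, hν₁ B hB, hν₁ _ (by simp [hB])]; simp
  · rw [hν₁ A hA, hν₀ B hB, hν₁ _ (by simp [hA])]; simp
  · rw [hν₁ A hA, hν₁ B hB, hν₁ _ (by simp [hA]), max_self]

lemma forall_mem_interval_iff_oval_compl_eq_zero (hR : R.Nonempty) {μ₀ : Capacity X}
    (hμ₀ : ∀ F : Closeds X, F ≠ ⊤ → μ₀.toFun F = 0) (α : Capacity X) :
    (∀ F : Closeds X, min (μ₀.toFun F) (ν.toFun F) ≤ α.toFun F ∧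
      α.toFun F ≤ max (μ₀.toFun F) (ν.toFun F)) ↔ α.oval Rᶜ = 0 := by
  have hne_top : ∀ F : Closeds X, Disjoint (F : Set X) R → F ≠ ⊤ := by
    rintro F hF rfl
    exact hR.ne_empty (disjoint_univ.mp hF.symm)
  rw [oval_compl_eq_zero_iff]
  constructor
  · intro h K hK
    have := (h K).2
    rw [hμ₀ K (hne_top K hK), hν₀ K hK, max_self] at this
    exact this.antisymm (α.toFun_nonneg K)
  · intro h F
    by_cases hF : F = ⊤
    · subst hF
      rw [α.univ', μ₀.univ', hν₁ ⊤ fun h => hR.ne_empty (disjoint_univ.mp h.symm)]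
      simp
    rw [hμ₀ F hF]
    by_cases hdisj : Disjoint (F : Set X) R
    · simp [h F hdisj, hν₀ F hdisj]
    · rw [hν₁ F hdisj]
      exact ⟨by simp [α.toFun_nonneg], le_max_of_le_right (α.toFun_le_one F)⟩

end MeetsIndicator

end Capacity

open Capacity

lemma eq_setOf_sInf_le_and_le_sSup {X : Type u} [TopologicalSpace X] {A : Set (Capacity X)}
    (P : Capacity X → Prop) (lo hi : Closeds X → ℝ)
    (hA : A = {α | P α ∧ ∀ F, lo F ≤ α.toFun F ∧ α.toFun F ≤ hi F}) (hne : A.Nonempty) :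
    A = {α | P α ∧ ∀ F, sInf ((fun ν : Capacity X => ν.toFun F) '' A) ≤ α.toFun F ∧
      α.toFun F ≤ sSup ((fun ν : Capacity X => ν.toFun F) '' A)} := by
  have hlo : ∀ F, lo F ∈ lowerBounds ((fun ν : Capacity X => ν.toFun F) '' A) := by
    rintro F _ ⟨ν, hν, rfl⟩
    exact ((hA ▸ hν : ν ∈ {α | _}).2 F).1
  have hhi : ∀ F, hi F ∈ upperBounds ((fun ν : Capacity X => ν.toFun F) '' A) := by
    rintro F _ ⟨ν, hν, rfl⟩
    exact ((hA ▸ hν : ν ∈ {α | _}).2 F).2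
  ext α
  constructor
  · intro hα
    have hP := (hA ▸ hα : α ∈ {α | _}).1
    exact ⟨hP, fun F => ⟨csInf_le ⟨_, hlo F⟩ ⟨α, hα, rfl⟩, le_csSup ⟨_, hhi F⟩ ⟨α, hα, rfl⟩⟩⟩
  · rintro ⟨hP, hα⟩
    rw [hA]
    exact ⟨hP, fun F => ⟨(le_csInf (hne.image _) (hlo F)).trans (hα F).1,
      (hα F).2.trans (csSup_le (hne.image _) (hhi F))⟩⟩

/-- for a nonempty closed `R ⊆ X`, the set
`A = {μ ∈ M_∪X : μ(X ∖ R) = 0}` of possibility capacities supported in `R` equals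
`[μ₀X, ν_R] ∩ M_∪X`, where `μ₀X` is the least capacity and `ν_R(A) = 1` iff `A` meets
`R`; in particular `A` is closed and belongs to the convexity `C_{∪X}`. -/
theorem supported_capacities_convex (X : Type u) [TopologicalSpace X]
    [CompactSpace X] [T2Space X]
    (R : Set X) (hR : IsClosed R) (hRne : R.Nonempty)
    (μ₀ : Capacity X)
    (hμ₀ : ∀ F : Set X, IsClosed F → F ≠ Set.univ → μ₀.cval F = 0)
    (νR : Capacity X)
    (hνR : ∀ F : Set X, IsClosed F →
      ((F ∩ R).Nonempty → νR.cval F = 1) ∧ (F ∩ R = ∅ → νR.cval F = 0)) :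
    {μ : Capacity X | IsPossibility μ ∧ μ.oval Rᶜ = 0} =
      {α : Capacity X | IsPossibility α ∧ ∀ F : Closeds X,
        min (μ₀.toFun F) (νR.toFun F) ≤ α.toFun F ∧
        α.toFun F ≤ max (μ₀.toFun F) (νR.toFun F)} ∧
    IsClosed {μ : Capacity X | IsPossibility μ ∧ μ.oval Rᶜ = 0} ∧
    InConvexU {μ : Capacity X | IsPossibility μ ∧ μ.oval Rᶜ = 0} := by
  have hμ₀' : ∀ F : Closeds X, F ≠ ⊤ → μ₀.toFun F = 0 := fun F hF =>
    μ₀.cval_coe F ▸ hμ₀ F F.isClosed (fun h => hF (Closeds.ext h))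
  have hνR₀ : ∀ F : Closeds X, Disjoint (F : Set X) R → νR.toFun F = 0 := fun F h =>
    νR.cval_coe F ▸ (hνR F F.isClosed).2 (disjoint_iff_inter_eq_empty.mp h)
  have hνR₁ : ∀ F : Closeds X, ¬Disjoint (F : Set X) R → νR.toFun F = 1 := fun F h =>
    νR.cval_coe F ▸ (hνR F F.isClosed).1 (not_disjoint_iff_nonempty_inter.mp h)
  have heq : {μ : Capacity X | IsPossibility μ ∧ μ.oval Rᶜ = 0} =
      {α : Capacity X | IsPossibility α ∧ ∀ F : Closeds X,
        min (μ₀.toFun F) (νR.toFun F) ≤ α.toFun F ∧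
        α.toFun F ≤ max (μ₀.toFun F) (νR.toFun F)} := by
    simp only [forall_mem_interval_iff_oval_compl_eq_zero hνR₀ hνR₁ hRne hμ₀']
  have hclosed : IsClosed {μ : Capacity X | IsPossibility μ ∧ μ.oval Rᶜ = 0} :=
    ofPred_and ▸ isClosed_setOf_isPossibility.inter (isClosed_setOf_oval_eq_zero hR.isOpen_compl)
  have hνR_mem : νR ∈ {μ : Capacity X | IsPossibility μ ∧ μ.oval Rᶜ = 0} :=
    ⟨isPossibility_of_meets_indicator hνR₀ hνR₁, (oval_compl_eq_zero_iff νR R).mpr hνR₀⟩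
  exact ⟨heq, hclosed, Or.inr ⟨⟨νR, hνR_mem⟩, hclosed, fun _ hμ => hμ.1,
    eq_setOf_sInf_le_and_le_sSup _ _ _ heq ⟨νR, hνR_mem⟩⟩⟩
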